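/- arXiv:1801.05296 — 4 statements merged into one kernel-verified Lean document; each statement's English description precedes it below -/
import Mathlib

section
/- For positive reals d1, d2, c, β and λ ∈ (0, 1/β), the quadratic D(λ,p) = c(1-βλ)/(1+λ) + [d1·c - d2·λ(1-βλ)/(1+λ)]·p + d1·d2·p² is positive for all p ≥ 0 if and only if d1/d2 > ((1-βλ)/c)·(1 - 1/√(λ+1))². -/
set_option maxHeartbeats 1600000 in
theorem stmt0 (d1 d2 c β lam : ℝ) (hd1 : 0 < d1) (hd2 : 0 < d2) (hc : 0 < c)
    (hβ : 0 < β) (hlam : lam ∈ Set.Ioo 0 (1/β)) :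
    (∀ p : ℝ, 0 ≤ p →
      0 < c*(1-β*lam)/(1+lam) + (d1*c - d2*lam*(1-β*lam)/(1+lam))*p + d1*d2*p^2)
    ↔ d1/d2 > ((1-β*lam)/c) * (1 - 1/Real.sqrt (lam+1))^2 := by
  obtain ⟨hl0, hl1⟩ := hlam
  have hβl : β * lam < 1 := by
    have h := (lt_div_iff₀ hβ).mp hl1
    nlinarith
  have h1l : (0:ℝ) < 1 + lam := by linarith
  set t : ℝ := (1 - β*lam)/(1+lam) with htdef
  have ht : 0 < t := div_pos (by linarith) h1l
  set s : ℝ := Real.sqrt (lam+1) with hsdef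
  have hs2 : s^2 = lam + 1 := Real.sq_sqrt (by linarith)
  have hs1 : 1 ≤ s := by
    nlinarith [Real.sqrt_nonneg (lam+1), hs2]
  have hs0 : 0 < s := by linarith
  set u : ℝ := Real.sqrt (d1*c) with hudef
  have hu2 : u^2 = d1*c := Real.sq_sqrt (by positivity)
  have hu : 0 < u := Real.sqrt_pos.mpr (by positivity)
  set v : ℝ := Real.sqrt (d2*t) with hvdef
  have hv2 : v^2 = d2*t := Real.sq_sqrt (by positivity)
  have hv : 0 < v := Real.sqrt_pos.mpr (by positivity)
  have huv2 : (u*v)^2 = d1*d2*(c*t) := by rw [mul_pow, hu2, hv2]; ring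
  clear_value t s u v
  -- rewrite the quadratic
  have e : ∀ p : ℝ, c*(1-β*lam)/(1+lam) + (d1*c - d2*lam*(1-β*lam)/(1+lam))*p + d1*d2*p^2
      = c*t + (u^2 - lam*v^2)*p + d1*d2*p^2 := by
    intro p
    rw [hu2, hv2, htdef]
    ring
  -- key quadratic equivalence
  have key : (∀ p : ℝ, 0 ≤ p → 0 < c*t + (u^2 - lam*v^2)*p + d1*d2*p^2)
      ↔ 0 < u^2 + 2*(u*v) - lam*v^2 := by
    constructor
    · intro h
      by_contra hn
      push_neg at hn
      set p0 : ℝ := Real.sqrt ((c*t)/(d1*d2)) with hp0def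
      have hp0 : 0 < p0 := Real.sqrt_pos.mpr (by positivity)
      have hp02 : p0^2 = (c*t)/(d1*d2) := Real.sq_sqrt (by positivity)
      have h1 : d1*d2*p0^2 = c*t := by rw [hp02]; field_simp
      have h2 : (u*v)*p0 = c*t := by
        have hsq : ((u*v)*p0)^2 = (c*t)^2 := by
          rw [mul_pow, huv2, hp02]; field_simp
        nlinarith [mul_pos (mul_pos hu hv) hp0, mul_pos hc ht]
      have hval := h p0 hp0.le
      have hn' : u^2 - lam*v^2 ≤ -2*(u*v) := by linarith
      have := mul_le_mul_of_nonneg_right hn' hp0.le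
      linarith
    · intro h p hp
      rcases eq_or_lt_of_le hp with rfl | hp
      · simpa using mul_pos hc ht
      · have hC : 0 < c*t := mul_pos hc ht
        have step : 2*(u*v)*p*(c*t) ≤ (c*t)^2 + (u*v)^2*p^2 := by
          nlinarith [sq_nonneg (u*v*p - c*t)]
        rw [huv2] at step
        have h4 : 2*(u*v)*p*(c*t) ≤ (c*t + d1*d2*p^2)*(c*t) := by linarith [step]
        have hAM : 2*(u*v)*p ≤ c*t + d1*d2*p^2 := le_of_mul_le_mul_right h4 hC
        linarith [mul_pos h hp]
  -- algebraic reformulation of RHS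
  have e2 : ((1-β*lam)/c) * (1 - 1/s)^2 = ((s-1)*v)^2/(d2*c) := by
    rw [show (1:ℝ) - 1/s = (s-1)/s from by field_simp, div_pow, hs2,
      mul_pow, hv2, htdef]
    field_simp
    ring
  have hfin : (0 < u^2 + 2*(u*v) - lam*v^2) ↔ d1/d2 > ((1-β*lam)/c) * (1 - 1/s)^2 := by
    rw [e2, gt_iff_lt, div_lt_div_iff₀ (by positivity) hd2]
    have hsv : 0 ≤ (s-1)*v := mul_nonneg (by linarith) hv.le
    have hu2' : u^2*d2 = d1*(d2*c) := by rw [hu2]; ring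
    have hs2v : s^2*v^2 = (lam+1)*v^2 := by rw [hs2]
    constructor
    · intro h
      have h5 : (s*v)^2 < (u+v)^2 := by
        have : (s*v)^2 = (lam+1)*v^2 := by rw [mul_pow, hs2]
        rw [this]; nlinarith [h]
      have h6 : s*v < u+v := lt_of_pow_lt_pow_left₀ 2 (by positivity) h5
      have hlt : (s-1)*v < u := by nlinarith [h6]
      have h7 : ((s-1)*v)^2 < u^2 := pow_lt_pow_left₀ hlt hsv two_ne_zero
      linarith [mul_lt_mul_of_pos_right h7 hd2, hu2']
    · intro h
      have h2 : ((s-1)*v)^2 < u^2 :=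
        lt_of_mul_lt_mul_right (by linarith [hu2']) hd2.le
      have hlt : (s-1)*v < u := lt_of_pow_lt_pow_left₀ 2 hu.le h2
      have h8 := mul_lt_mul_of_pos_right hlt hv
      nlinarith [h2, h8, hs2v]
  constructor
  · intro h
    exact hfin.mp (key.mp (by intro p hp; rw [← e p]; exact h p hp))
  · intro h p hp
    rw [e p]
    exact key.mpr (hfin.mpr h) p hp
end

section
/- Let β, c > 0 and define p1(λ) = ((1-βλ)/c)·(1 - 1/√(λ+1))² on [0, 1/β]. Then there exists a unique λ1 ∈ (0, 1/β) solving β·(1 - 1/√(λ+1)) = (1-βλ)·(λ+1)^{-3/2}, and p1'(λ) > 0 on (0, λ1), p1'(λ) < 0 on (λ1, 1/β), so p1 attains its maximum on [0, 1/β] at λ1. -/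
/-!
Up to the positive factor `(1 - (λ+1)^{-1/2}) / c`, the derivative of `p1` is `-g(λ)` with
`g(λ) = β (1 - (λ+1)^{-1/2}) - (1 - βλ)(λ+1)^{-3/2}`, and the critical-point equation is `g = 0`.
On `[0, 1/β]` the first term of `g` increases and the second decreases, so `g` is strictly
increasing, from `g 0 = -1` to `g (1/β) > 0`. Hence `g` has exactly one zero `λ1`, `p1` increases
before it and decreases after it.
-/

open Real Set

lemma rpow_neg_three_halves {x : ℝ} (hx : 0 < x) : x ^ (-(3:ℝ)/2) = 1 / (x * √x) := by
  rw [show (-(3:ℝ)/2) = -(1 + 1/2) by norm_num, rpow_neg hx.le, rpow_add hx, rpow_one,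
    ← sqrt_eq_rpow, one_div]

lemma one_sub_one_div_sqrt_add_one_pos {x : ℝ} (hx : 0 < x) : 0 < 1 - 1 / √(x + 1) := by
  have hsqrt : 1 < √(x + 1) := lt_sqrt_of_sq_lt (by linarith)
  rwa [sub_pos, div_lt_one (by linarith)]

noncomputable def criticalGap (β lam : ℝ) : ℝ :=
  β * (1 - 1 / √(lam + 1)) - (1 - β * lam) / ((lam + 1) * √(lam + 1))

noncomputable def p1 (β c lam : ℝ) : ℝ := ((1 - β * lam) / c) * (1 - 1 / √(lam + 1)) ^ 2

lemma hasDerivAt_p1 (β c : ℝ) {lam : ℝ} (hlam : -1 < lam) :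
    HasDerivAt (p1 β c) ((1 - 1 / √(lam + 1)) / c * -criticalGap β lam) lam := by
  have hpos : 0 < lam + 1 := by linarith
  have hsqrt_pos : 0 < √(lam + 1) := sqrt_pos.mpr hpos
  have hsq : √(lam + 1) ^ 2 = lam + 1 := sq_sqrt hpos.le
  have hsqrt : HasDerivAt (fun x : ℝ => √(x + 1)) (1 / (2 * √(lam + 1))) lam := by
    simpa [Function.comp_def] using
      (hasDerivAt_sqrt hpos.ne').comp lam ((hasDerivAt_id lam).add_const 1)
  have hfactor : HasDerivAt (fun x : ℝ => 1 - 1 / √(x + 1))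
      (1 / (2 * √(lam + 1)) / √(lam + 1) ^ 2) lam := by
    simpa only [one_div, neg_div, sub_neg_eq_add, zero_add] using
      (hasDerivAt_const lam (1 : ℝ)).fun_sub (hsqrt.fun_inv hsqrt_pos.ne')
  have hlin : HasDerivAt (fun x : ℝ => (1 - β * x) / c) (-β / c) lam := by
    simpa using (((hasDerivAt_id' lam).const_mul β).const_sub 1).div_const c
  refine (hlin.fun_mul (hfactor.fun_pow 2)).congr_deriv ?_
  rw [criticalGap]
  set s := √(lam + 1)
  rw [← hsq]
  norm_num only [pow_one]
  field_simp
  ring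

lemma criticalGap_zero (β : ℝ) : criticalGap β 0 = -1 := by
  simp [criticalGap]

lemma criticalGap_inv_pos {β : ℝ} (hβ : 0 < β) : 0 < criticalGap β (1 / β) := by
  rw [criticalGap, mul_one_div_cancel hβ.ne', sub_self, zero_div, sub_zero]
  exact mul_pos hβ (one_sub_one_div_sqrt_add_one_pos (by positivity))

lemma continuousOn_criticalGap (β : ℝ) : ContinuousOn (criticalGap β) (Ioi (-1)) := by
  intro x hx
  have hpos : 0 < x + 1 := by linarith [mem_Ioi.mp hx]
  have hsqrt : √(x + 1) ≠ 0 := (sqrt_pos.mpr hpos).ne'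
  have hcube : (x + 1) * √(x + 1) ≠ 0 := mul_ne_zero hpos.ne' hsqrt
  unfold criticalGap
  exact ContinuousAt.continuousWithinAt (by fun_prop (disch := assumption))

lemma strictMonoOn_criticalGap {β : ℝ} (hβ : 0 < β) :
    StrictMonoOn (criticalGap β) (Icc 0 (1 / β)) := by
  intro x hx y hy hxy
  have hsqrt_pos : 0 < √(x + 1) := sqrt_pos.mpr (by linarith [hx.1])
  have hsqrt_lt : √(x + 1) < √(y + 1) := sqrt_lt_sqrt (by linarith [hx.1]) (by linarith)
  have hcube_lt : (x + 1) * √(x + 1) < (y + 1) * √(y + 1) :=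
    mul_lt_mul' (by linarith) hsqrt_lt hsqrt_pos.le (by linarith [hx.1])
  have hcube_pos : 0 < (x + 1) * √(x + 1) := mul_pos (by linarith [hx.1]) hsqrt_pos
  have hy_le : 0 ≤ 1 - β * y := by linarith [(le_div_iff₀' hβ).mp hy.2]
  have hfirst : β * (1 - 1 / √(x + 1)) < β * (1 - 1 / √(y + 1)) := by gcongr
  have hsecond : (1 - β * y) / ((y + 1) * √(y + 1)) < (1 - β * x) / ((x + 1) * √(x + 1)) :=
    calc (1 - β * y) / ((y + 1) * √(y + 1))
        ≤ (1 - β * y) / ((x + 1) * √(x + 1)) := by gcongr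
      _ < (1 - β * x) / ((x + 1) * √(x + 1)) := by gcongr
  simp only [criticalGap]
  linarith

lemma criticalGap_eq_zero_iff (β : ℝ) {lam : ℝ} (hlam : -1 < lam) :
    criticalGap β lam = 0 ↔
      β * (1 - 1 / √(lam + 1)) = (1 - β * lam) * (lam + 1) ^ (-(3:ℝ)/2) := by
  rw [rpow_neg_three_halves (by linarith), mul_one_div, criticalGap, sub_eq_zero]

lemma exists_criticalGap_eq_zero {β : ℝ} (hβ : 0 < β) :
    ∃ lam1 ∈ Ioo 0 (1 / β), criticalGap β lam1 = 0 := by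
  have hcont : ContinuousOn (criticalGap β) (Icc 0 (1 / β)) :=
    (continuousOn_criticalGap β).mono fun x hx => by
      rw [mem_Ioi]; linarith [hx.1]
  refine intermediate_value_Ioo (by positivity) hcont ⟨?_, criticalGap_inv_pos hβ⟩
  rw [criticalGap_zero]
  norm_num

theorem isMaxOn_of_deriv_pos_of_deriv_neg {f : ℝ → ℝ} {a m b : ℝ}
    (hf : ContinuousOn f (Icc a b)) (hm : m ∈ Icc a b)
    (hpos : ∀ x ∈ Ioo a m, 0 < deriv f x) (hneg : ∀ x ∈ Ioo m b, deriv f x < 0) :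
    IsMaxOn f (Icc a b) m := by
  have hmono : MonotoneOn f (Icc a m) :=
    (strictMonoOn_of_deriv_pos (convex_Icc a m) (hf.mono (Icc_subset_Icc_right hm.2))
      (by rwa [interior_Icc])).monotoneOn
  have hanti : AntitoneOn f (Icc m b) :=
    (strictAntiOn_of_deriv_neg (convex_Icc m b) (hf.mono (Icc_subset_Icc_left hm.1))
      (by rwa [interior_Icc])).antitoneOn
  intro x hx
  rcases le_total x m with hxm | hmx
  · exact hmono ⟨hx.1, hxm⟩ ⟨hm.1, le_rfl⟩ hxm
  · exact hanti ⟨le_rfl, hm.2⟩ ⟨hmx, hx.2⟩ hmx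

lemma deriv_p1_pos {β c lam : ℝ} (hc : 0 < c) (hlam : 0 < lam) (hgap : criticalGap β lam < 0) :
    0 < deriv (p1 β c) lam := by
  rw [(hasDerivAt_p1 β c (by linarith)).deriv]
  exact mul_pos (div_pos (one_sub_one_div_sqrt_add_one_pos hlam) hc) (neg_pos.mpr hgap)

lemma deriv_p1_neg {β c lam : ℝ} (hc : 0 < c) (hlam : 0 < lam) (hgap : 0 < criticalGap β lam) :
    deriv (p1 β c) lam < 0 := by
  rw [(hasDerivAt_p1 β c (by linarith)).deriv]
  exact mul_neg_of_pos_of_neg (div_pos (one_sub_one_div_sqrt_add_one_pos hlam) hc)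
    (neg_neg_iff_pos.mpr hgap)

theorem stmt5 (β c : ℝ) (hβ : 0 < β) (hc : 0 < c) :
    let p1 : ℝ → ℝ := fun lam => ((1-β*lam)/c) * (1 - 1/Real.sqrt (lam+1))^2
    ∃ lam1 ∈ Set.Ioo 0 (1/β),
      (β * (1 - 1/Real.sqrt (lam1+1)) = (1-β*lam1) * (lam1+1) ^ (-(3:ℝ)/2)) ∧
      (∀ lam ∈ Set.Ioo 0 (1/β),
        β * (1 - 1/Real.sqrt (lam+1)) = (1-β*lam) * (lam+1) ^ (-(3:ℝ)/2) → lam = lam1) ∧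
      (∀ lam ∈ Set.Ioo 0 lam1, 0 < deriv p1 lam) ∧
      (∀ lam ∈ Set.Ioo lam1 (1/β), deriv p1 lam < 0) ∧
      (∀ lam ∈ Set.Icc 0 (1/β), p1 lam ≤ p1 lam1) := by
  intro p
  obtain ⟨lam1, hlam1, hzero⟩ := exists_criticalGap_eq_zero hβ
  have hmono := strictMonoOn_criticalGap hβ
  have hlam1_mem : lam1 ∈ Icc 0 (1 / β) := Ioo_subset_Icc_self hlam1
  have hincr : ∀ lam ∈ Ioo 0 lam1, 0 < deriv (p1 β c) lam := fun lam hlam =>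
    deriv_p1_pos hc hlam.1 <| hzero ▸
      hmono ⟨hlam.1.le, hlam.2.le.trans hlam1_mem.2⟩ hlam1_mem hlam.2
  have hdecr : ∀ lam ∈ Ioo lam1 (1 / β), deriv (p1 β c) lam < 0 := fun lam hlam =>
    deriv_p1_neg hc (hlam1.1.trans hlam.1) <| hzero ▸
      hmono hlam1_mem ⟨hlam1_mem.1.trans hlam.1.le, hlam.2.le⟩ hlam.1
  have hcont : ContinuousOn (p1 β c) (Icc 0 (1 / β)) := fun x hx =>
    (hasDerivAt_p1 β c (by linarith [hx.1])).continuousAt.continuousWithinAt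
  refine ⟨lam1, hlam1, (criticalGap_eq_zero_iff β (by linarith [hlam1.1])).mp hzero,
    fun lam hlam heq => ?_, hincr, hdecr,
    isMaxOn_iff.mp (isMaxOn_of_deriv_pos_of_deriv_neg hcont hlam1_mem hincr hdecr)⟩
  have hlam_zero := (criticalGap_eq_zero_iff β (by linarith [hlam.1])).mpr heq
  exact hmono.injOn (Ioo_subset_Icc_self hlam) hlam1_mem (hlam_zero.trans hzero.symm)
end

section
/- Let β, c, d1, d2, ℓ > 0 and define T1(λ) = -c + λ(1-βλ)/(1+λ) - (d1+d2)/ℓ². If c < p2(λ2) := max_{λ∈[0,1/β]} λ(1-βλ)/(1+λ) and ℓ > ℓ1 := √((d1+d2)/(p2(λ2)-c)), then T1 has exactly two zeros λ_-, λ_+ in (0, 1/β) with λ_- < λ2 < λ_+, T1 > 0 on (λ_-, λ_+), and T1 < 0 on (0, λ_-) ∪ (λ_+, 1/β). -/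
/-!
Put `K = c + (d1+d2)/ℓ²`. For `λ > -1`, `T1 λ = -q λ / (1 + λ)` with the quadratic
`q λ = β λ² + (K - 1) λ + K`, and the bound on `ℓ` says exactly `K < p2 λ2`, i.e. `q λ2 < 0`.
So `q` has two real roots straddling `λ2`, and since `q 0 = K > 0` and `q (1/β) = K (1 + β)/β > 0`
both roots lie in `(0, 1/β)`. The sign of `T1` is the opposite of the sign of `q`.
-/

section FactoredQuadratic

variable {a r₁ r₂ x : ℝ}

theorem mul_sub_mul_sub_neg (ha : 0 < a) (h₁ : r₁ < x) (h₂ : x < r₂) :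
    a * (x - r₁) * (x - r₂) < 0 :=
  mul_neg_of_pos_of_neg (mul_pos ha (sub_pos.2 h₁)) (sub_neg.2 h₂)

theorem mul_sub_mul_sub_nonpos (ha : 0 ≤ a) (h₁ : r₁ ≤ x) (h₂ : x ≤ r₂) :
    a * (x - r₁) * (x - r₂) ≤ 0 :=
  mul_nonpos_of_nonneg_of_nonpos (mul_nonneg ha (sub_nonneg.2 h₁)) (sub_nonpos.2 h₂)

theorem mul_sub_mul_sub_pos_of_lt (ha : 0 < a) (h₁ : x < r₁) (h₂ : x < r₂) :
    0 < a * (x - r₁) * (x - r₂) :=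
  mul_pos_of_neg_of_neg (mul_neg_of_pos_of_neg ha (sub_neg.2 h₁)) (sub_neg.2 h₂)

theorem mul_sub_mul_sub_pos_of_gt (ha : 0 < a) (h₁ : r₁ < x) (h₂ : r₂ < x) :
    0 < a * (x - r₁) * (x - r₂) :=
  mul_pos (mul_pos ha (sub_pos.2 h₁)) (sub_pos.2 h₂)

theorem mul_sub_mul_sub_eq_zero_iff (ha : a ≠ 0) :
    a * (x - r₁) * (x - r₂) = 0 ↔ x = r₁ ∨ x = r₂ := by
  simp [ha, sub_eq_zero]

end FactoredQuadratic

theorem exists_roots_of_quadratic_neg {a b k x₀ : ℝ} (ha : 0 < a)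
    (h : a * x₀ ^ 2 + b * x₀ + k < 0) :
    ∃ r₁ r₂, r₁ < x₀ ∧ x₀ < r₂ ∧ ∀ x, a * x ^ 2 + b * x + k = a * (x - r₁) * (x - r₂) := by
  set s := Real.sqrt (b ^ 2 - 4 * a * k)
  -- completing the square: `4 a q x₀ = (2 a x₀ + b)² - discriminant`
  have hdisc : 0 < b ^ 2 - 4 * a * k := by nlinarith [sq_nonneg (2 * a * x₀ + b)]
  have hs : s ^ 2 = b ^ 2 - 4 * a * k := Real.sq_sqrt hdisc.le
  have hvertex : (2 * a * x₀ + b) ^ 2 < s ^ 2 := by rw [hs]; nlinarith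
  obtain ⟨hlow, hhigh⟩ := abs_lt.1 (abs_lt_of_sq_lt_sq hvertex (Real.sqrt_nonneg _))
  refine ⟨(-b - s) / (2 * a), (-b + s) / (2 * a), ?_, ?_, fun x => ?_⟩
  · rw [div_lt_iff₀ (by positivity)]; linarith
  · rw [lt_div_iff₀ (by positivity)]; linarith
  · field_simp
    linear_combination hs

theorem exists_zeros_of_lt_div {β K x₀ : ℝ} (hβ : 0 < β) (hK : 0 < K) (hx₀ : 0 < x₀)
    (h : K < x₀ * (1 - β * x₀) / (1 + x₀)) :
    ∃ r₁ r₂, 0 < r₁ ∧ r₁ < x₀ ∧ x₀ < r₂ ∧ r₂ < 1 / β ∧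
      ∀ x, -1 < x → -K + x * (1 - β * x) / (1 + x) = -(β * (x - r₁) * (x - r₂)) / (1 + x) := by
  rw [lt_div_iff₀ (by linarith)] at h
  have hx₀β : x₀ < 1 / β := by
    have : 0 < 1 - β * x₀ := pos_of_mul_pos_right (by nlinarith) hx₀.le
    rw [lt_div_iff₀ hβ]; linarith
  obtain ⟨r₁, r₂, h₁, h₂, hq⟩ :=
    exists_roots_of_quadratic_neg (b := K - 1) (k := K) (x₀ := x₀) hβ (by linarith)
  have hr₁ : 0 < r₁ := by
    by_contra! hr
    have hq0 := hq 0
    linarith [mul_sub_mul_sub_nonpos hβ.le hr (hx₀.trans h₂).le]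
  have hr₂ : r₂ < 1 / β := by
    by_contra! hr
    have hqβ := hq (1 / β)
    have : 0 < β * (1 / β) ^ 2 + (K - 1) * (1 / β) + K := by
      field_simp; nlinarith
    linarith [mul_sub_mul_sub_nonpos hβ.le (h₁.trans hx₀β).le hr]
  refine ⟨r₁, r₂, hr₁, h₁, h₂, hr₂, fun x hx => ?_⟩
  have : 1 + x ≠ 0 := by linarith
  rw [← hq x]
  field_simp
  ring

theorem stmt6_general (β c d1 d2 ℓ : ℝ) (hβ : 0 < β) (hc : 0 < c) (hd1 : 0 < d1)
    (hd2 : 0 < d2) :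
    let p2 : ℝ → ℝ := fun lam => lam*(1-β*lam)/(1+lam)
    let lam2 : ℝ := Real.sqrt ((β+1)/β) - 1
    let T1 : ℝ → ℝ := fun lam => -c + lam*(1-β*lam)/(1+lam) - (d1+d2)/ℓ^2
    c < p2 lam2 → ℓ > Real.sqrt ((d1+d2)/(p2 lam2 - c)) →
    ∃ lamm lamp : ℝ,
      0 < lamm ∧ lamm < lam2 ∧ lam2 < lamp ∧ lamp < 1/β ∧
      T1 lamm = 0 ∧ T1 lamp = 0 ∧
      (∀ lam ∈ Set.Ioo lamm lamp, 0 < T1 lam) ∧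
      (∀ lam ∈ Set.Ioo 0 lamm ∪ Set.Ioo lamp (1/β), T1 lam < 0) ∧
      (∀ lam ∈ Set.Ioo 0 (1/β), T1 lam = 0 → lam = lamm ∨ lam = lamp) := by
  intro p2 lam2 T1 hcp hℓ
  have hlam2 : 0 < lam2 := by
    rw [sub_pos, Real.lt_sqrt zero_le_one, one_pow, lt_div_iff₀ hβ]
    linarith
  have hK : c + (d1 + d2) / ℓ ^ 2 < p2 lam2 := by
    have hℓ0 : 0 < ℓ := (Real.sqrt_nonneg _).trans_lt hℓ
    have h := (Real.sqrt_lt' hℓ0).1 hℓ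
    rw [div_lt_iff₀ (sub_pos.2 hcp)] at h
    rw [← lt_sub_iff_add_lt', div_lt_iff₀ (by positivity)]
    linarith
  obtain ⟨r₁, r₂, hr₁, hr₁lam2, hlam2r₂, hr₂, hT⟩ :=
    exists_zeros_of_lt_div hβ (by positivity) hlam2 hK
  have hT1 : ∀ x, -1 < x → T1 x = -(β * (x - r₁) * (x - r₂)) / (1 + x) := fun x hx => by
    rw [← hT x hx]; ring
  refine ⟨r₁, r₂, hr₁, hr₁lam2, hlam2r₂, hr₂, ?_, ?_, ?_, ?_, ?_⟩
  · simp [hT1 r₁ (by linarith)]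
  · simp [hT1 r₂ (by linarith)]
  · rintro x ⟨hx₁, hx₂⟩
    rw [hT1 x (by linarith)]
    exact div_pos (neg_pos.2 (mul_sub_mul_sub_neg hβ hx₁ hx₂)) (by linarith)
  · rintro x (⟨hx₀, hx₁⟩ | ⟨hx₂, -⟩) <;> rw [hT1 x (by linarith)] <;>
      refine div_neg_of_neg_of_pos (neg_neg_iff_pos.2 ?_) (by linarith)
    · exact mul_sub_mul_sub_pos_of_lt hβ hx₁ (by linarith)
    · exact mul_sub_mul_sub_pos_of_gt hβ (by linarith) hx₂
  · rintro x ⟨hx₀, -⟩ hx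
    rw [hT1 x (by linarith), div_eq_zero_iff, neg_eq_zero] at hx
    exact (mul_sub_mul_sub_eq_zero_iff hβ.ne').1 (hx.resolve_right (by linarith))

theorem stmt6 (β c d1 d2 ℓ : ℝ) (hβ : 0 < β) (hc : 0 < c) (hd1 : 0 < d1)
    (hd2 : 0 < d2) (hℓ : 0 < ℓ) :
    let p2 : ℝ → ℝ := fun lam => lam*(1-β*lam)/(1+lam)
    let lam2 : ℝ := Real.sqrt ((β+1)/β) - 1
    let T1 : ℝ → ℝ := fun lam => -c + lam*(1-β*lam)/(1+lam) - (d1+d2)/ℓ^2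
    c < p2 lam2 → ℓ > Real.sqrt ((d1+d2)/(p2 lam2 - c)) →
    ∃ lamm lamp : ℝ,
      0 < lamm ∧ lamm < lam2 ∧ lam2 < lamp ∧ lamp < 1/β ∧
      T1 lamm = 0 ∧ T1 lamp = 0 ∧
      (∀ lam ∈ Set.Ioo lamm lamp, 0 < T1 lam) ∧
      (∀ lam ∈ Set.Ioo 0 lamm ∪ Set.Ioo lamp (1/β), T1 lam < 0) ∧
      (∀ lam ∈ Set.Ioo 0 (1/β), T1 lam = 0 → lam = lamm ∨ lam = lamp) :=
  stmt6_general β c d1 d2 ℓ hβ hc hd1 hd2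
end

section
/- Let d1, d2 > 0 with d1/d2 > max_{λ∈[0,1/β]} p1(λ) where p1(λ) = ((1-βλ)/c)·(1 - 1/√(λ+1))². Then for every λ ∈ (0, 1/β), every ℓ > 0 and every n ∈ ℕ (n ≥ 1), Dn(λ) := c(1-βλ)/(1+λ) + [d1·c - d2·λ(1-βλ)/(1+λ)]·n²/ℓ² + d1·d2·n⁴/ℓ⁴ > 0. -/
set_option maxHeartbeats 1000000 in
theorem stmt18 (β c d1 d2 : ℝ) (hβ : 0 < β) (hc : 0 < c) (hd1 : 0 < d1)
    (hd2 : 0 < d2)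
    (hmax : ∀ lam ∈ Set.Icc 0 (1/β),
      ((1-β*lam)/c) * (1 - 1/Real.sqrt (lam+1))^2 < d1/d2) :
    ∀ lam ∈ Set.Ioo 0 (1/β), ∀ ℓ : ℝ, 0 < ℓ → ∀ n : ℕ, 1 ≤ n →
      0 < c*(1-β*lam)/(1+lam)
        + (d1*c - d2*lam*(1-β*lam)/(1+lam)) * (n:ℝ)^2/ℓ^2
        + d1*d2*(n:ℝ)^4/ℓ^4 := by
  rintro lam ⟨hlam0, hlam1⟩ ℓ hℓ n hn
  have hβl : lam * β < 1 := (lt_div_iff₀ hβ).mp hlam1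
  have hβlam : 0 < 1 - β * lam := by linarith [hβl, mul_comm lam β]
  have h1lam : 0 < 1 + lam := by linarith
  set a := (1 - β*lam)/(1+lam) with ha
  have hapos : 0 < a := div_pos hβlam h1lam
  have hp1 := hmax lam ⟨hlam0.le, hlam1.le⟩
  set s := Real.sqrt (lam+1) with hs
  have hs2 : s^2 = lam + 1 := Real.sq_sqrt (by linarith)
  have hs1 : 1 < s := by
    rw [hs]
    have := Real.lt_sqrt (x := 1) (y := lam+1) (by norm_num)
    exact this.mpr (by norm_num; linarith)
  have hsne : s ≠ 0 := by positivity
  have hq : (1 - 1/s)^2 = (s-1)^2/(lam+1) := by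
    rw [← hs2]; field_simp
  rw [hq] at hp1
  rw [div_mul_div_comm, div_lt_div_iff₀ (by positivity) hd2] at hp1
  -- hp1 : (1-β*lam) * (s-1)^2 * d2 < d1 * (c * (lam+1))
  clear_value a s
  set X := Real.sqrt (d2*a) with hXdef
  set Y := Real.sqrt (d1*c) with hYdef
  have hXpos : 0 < X := Real.sqrt_pos.mpr (mul_pos hd2 hapos)
  have hYpos : 0 < Y := Real.sqrt_pos.mpr (mul_pos hd1 hc)
  have hX2 : X^2 = d2*a := Real.sq_sqrt (mul_pos hd2 hapos).le
  have hY2 : Y^2 = d1*c := Real.sq_sqrt (mul_pos hd1 hc).le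
  clear_value X Y
  have h2 : (X*(s-1))^2 < Y^2 := by
    have : X^2 * (s-1)^2 < Y^2 := by
      rw [hX2, hY2, ha]
      rw [show d2 * ((1 - β * lam) / (1 + lam)) * (s - 1) ^ 2
          = ((1-β*lam)*(s-1)^2*d2)/(1+lam) from by ring, div_lt_iff₀ h1lam]
      linarith [hp1]
    linarith [this, sq_nonneg (X*(s-1))]
  have hkey1 : X*(s-1) < Y := by
    by_contra hcon
    push_neg at hcon
    have := pow_le_pow_left₀ hYpos.le hcon 2
    linarith
  have hsm1 : 0 < s - 1 := by linarith
  have t1 : 2*X*(X*(s-1)) < 2*X*Y := mul_lt_mul_of_pos_left hkey1 (by linarith)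
  have hl : lam = s^2 - 1 := by linarith [hs2]
  have hd2la : d2*lam*a = (X*(s-1))^2 + 2*X*(X*(s-1)) := by
    linear_combination (-lam)*hX2 + X^2*hl
  have hkey : d2*lam*a < d1*c + 2*(X*Y) := by
    rw [hd2la, ← hY2]; linarith [h2, t1]
  -- now set up u = sqrt(c*a), v = sqrt(d1*d2)
  set u := Real.sqrt (c*a) with hudef
  set v := Real.sqrt (d1*d2) with hvdef
  have hu2 : u^2 = c*a := Real.sq_sqrt (mul_pos hc hapos).le
  have hv2 : v^2 = d1*d2 := Real.sq_sqrt (mul_pos hd1 hd2).le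
  have huv0 : u*v = X*Y := by
    rw [hudef, hvdef, hXdef, hYdef, ← Real.sqrt_mul (mul_pos hc hapos).le,
      ← Real.sqrt_mul (mul_pos hd2 hapos).le]
    congr 1; ring
  clear_value u v
  have huv : u*v = X*Y := huv0
  set p := (n:ℝ)^2/ℓ^2 with hp
  clear_value p
  have hnpos : (0:ℝ) < (n:ℝ) := by exact_mod_cast Nat.lt_of_lt_of_le Nat.zero_lt_one hn
  have hppos : 0 < p := hp ▸ div_pos (pow_pos hnpos 2) (pow_pos hℓ 2)
  have e1 : c*(1-β*lam)/(1+lam) = c*a := by rw [ha]; ring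
  have e2 : d2*lam*(1-β*lam)/(1+lam) = d2*lam*a := by rw [ha]; ring
  have e3 : d1*d2*(n:ℝ)^4/ℓ^4 = (d1*d2)*p^2 := by rw [hp]; field_simp
  have e4 : (d1*c - d2*lam*a)*(n:ℝ)^2/ℓ^2 = (d1*c - d2*lam*a)*p := by
    rw [hp]; ring
  rw [e1, e2, e4, e3]
  have hmargin : 0 < d1*c + 2*(u*v) - d2*lam*a := by rw [huv]; linarith
  linarith [sq_nonneg (u - p*v), mul_pos hppos hmargin, hu2,
    (by rw [hv2] : v^2*p^2 = d1*d2*p^2)]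
end
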